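/- arXiv:1505.02910 — 2 statements merged into one kernel-verified Lean document; each statement's English description precedes it below -/
import Mathlib

section
/- Let m = 2n, ε = (ε_1,...,ε_m) i.i.d. uniform ±1 signs, t(ε) a uniformly random nearest balanced sign vector to ε in Hamming distance. Then for each coordinate q, the conditional probability P(ε_q ≠ t_q(ε) | t(ε) = e) = (1/2) · binom(m,n) · 2^{−m} ≤ 1/√(2πm), for any balanced sign vector e. -/
/-!
Identify a sign vector with its set of `true` coordinates. The balanced vectors nearest to `ε` are
exactly the balanced sets comparable with that of `ε` under inclusion, so `|t(ε)|` only depends on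
the number `k` of `true` coordinates of `ε`: it is `C(k, n)` for `k ≥ n` and, since negating all
signs is a symmetry of the whole picture when `m = 2n`, `C(m - k, n)` for `k ≤ n`. Both weights in
the conditional probability thereby become sums over the subsets of a fixed set.

The denominator, `2^m P(t(ε) = e)`, only depends on `|E| = n`, and these probabilities add up to
`1` over the `C(m, n)` balanced vectors, so `t(ε)` is uniform. After negating if necessary,
`e_q = +1`, and the event `ε_q ≠ t_q(ε) ∧ t(ε) = e` forces the set of `ε` inside `E \ {q}`; the
resulting sum `Σ_{j<n} C(n-1, j) / C(2n-j, n)` telescopes to `1/2`. The final bound is Stirling's: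
`C(2n, n) √(πn) ≤ 4^n` because the Stirling sequence decreases to `√π`.
-/

open Finset
open scoped Classical

/-- Sign vectors on `Fin m` with exactly `n` coordinates equal to `+1`
(encoded as `true`). -/
noncomputable def balanced (m n : ℕ) : Finset (Fin m → Bool) :=
  Finset.univ.filter fun v => (Finset.univ.filter fun i => v i = true).card = n

/-- Hamming distance between two sign vectors. -/
def hamm {m : ℕ} (v w : Fin m → Bool) : ℕ :=
  (Finset.univ.filter fun i => v i ≠ w i).card

/-- `Tset m n v`: the balanced sign vectors at minimal Hamming distance
from `v`. -/
noncomputable def Tset (m n : ℕ) (v : Fin m → Bool) : Finset (Fin m → Bool) :=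
  (balanced m n).filter fun w => ∀ w' ∈ balanced m n, hamm v w ≤ hamm v w'

lemma dist_card_le_card_sdiff_add_card_sdiff {α : Type*} [DecidableEq α] (s t : Finset α) :
    Nat.dist #s #t ≤ #(s \ t) + #(t \ s) := by
  rw [Nat.dist]
  grind

lemma card_sdiff_add_card_sdiff_eq_dist_iff {α : Type*} [DecidableEq α] {s t : Finset α} :
    #(s \ t) + #(t \ s) = Nat.dist #s #t ↔ t ⊆ s ∨ s ⊆ t := by
  rw [Nat.dist, ← sdiff_eq_empty_iff_subset, ← sdiff_eq_empty_iff_subset, ← card_eq_zero,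
    ← card_eq_zero]
  grind

section

variable {m n : ℕ}

def trueSet (v : Fin m → Bool) : Finset (Fin m) :=
  univ.filter fun i => v i = true

def trueSetEquiv : (Fin m → Bool) ≃ Finset (Fin m) where
  toFun := trueSet
  invFun A i := decide (i ∈ A)
  left_inv v := by funext i; simp [trueSet]
  right_inv A := by ext i; simp [trueSet]

@[simp]
lemma trueSetEquiv_apply (v : Fin m → Bool) : trueSetEquiv v = trueSet v := rfl

@[simp]
lemma trueSet_trueSetEquiv_symm (A : Finset (Fin m)) : trueSet (trueSetEquiv.symm A) = A :=
  trueSetEquiv.apply_symm_apply A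

lemma trueSet_injective : Function.Injective (trueSet (m := m)) :=
  trueSetEquiv.injective

lemma mem_balanced_iff {v : Fin m → Bool} : v ∈ balanced m n ↔ #(trueSet v) = n := by
  simp [balanced, trueSet]

lemma trueSet_not_comp (v : Fin m → Bool) : trueSet (not ∘ v) = (trueSet v)ᶜ := by
  ext i; simp [trueSet]

lemma card_trueSet_not_comp (v : Fin m → Bool) : #(trueSet (not ∘ v)) = m - #(trueSet v) := by
  rw [trueSet_not_comp, card_compl, Fintype.card_fin]

lemma hamm_eq_card_sdiff_add_card_sdiff (v w : Fin m → Bool) :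
    hamm v w = #(trueSet v \ trueSet w) + #(trueSet w \ trueSet v) := by
  rw [hamm, ← card_union_of_disjoint disjoint_sdiff_sdiff]
  congr 1
  ext i
  cases hv : v i <;> cases hw : w i <;> simp [trueSet, hv, hw]

lemma card_balanced : #(balanced m n) = m.choose n := by
  calc #(balanced m n) = #(powersetCard n (univ : Finset (Fin m))) := by
        rw [← card_map trueSetEquiv.toEmbedding]
        congr 1
        ext B
        obtain ⟨w, rfl⟩ := trueSetEquiv.surjective B
        simp [mem_map_equiv, mem_balanced_iff]
    _ = m.choose n := by rw [card_powersetCard, card_univ, Fintype.card_fin]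

lemma exists_mem_balanced_subset_or_superset (h : n ≤ m) (v : Fin m → Bool) :
    ∃ w ∈ balanced m n, trueSet w ⊆ trueSet v ∨ trueSet v ⊆ trueSet w := by
  obtain ⟨B, hB, hcard⟩ : ∃ B : Finset (Fin m), (B ⊆ trueSet v ∨ trueSet v ⊆ B) ∧ #B = n := by
    rcases le_total n #(trueSet v) with hv | hv
    · obtain ⟨B, hBv, hB⟩ := exists_subset_card_eq hv
      exact ⟨B, .inl hBv, hB⟩
    · obtain ⟨B, hvB, -, hB⟩ := exists_subsuperset_card_eq (subset_univ (trueSet v)) hv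
        (by simpa using h)
      exact ⟨B, .inr hvB, hB⟩
  obtain ⟨w, rfl⟩ := trueSetEquiv.surjective B
  exact ⟨w, mem_balanced_iff.2 hcard, hB⟩

lemma mem_Tset_iff (h : n ≤ m) {v w : Fin m → Bool} :
    w ∈ Tset m n v ↔ w ∈ balanced m n ∧ (trueSet w ⊆ trueSet v ∨ trueSet v ⊆ trueSet w) := by
  obtain ⟨w₀, hw₀, hcomp₀⟩ := exists_mem_balanced_subset_or_superset h v
  have hdist₀ := card_sdiff_add_card_sdiff_eq_dist_iff.2 hcomp₀
  rw [mem_balanced_iff.1 hw₀] at hdist₀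
  simp only [Tset, mem_filter, hamm_eq_card_sdiff_add_card_sdiff]
  refine and_congr_right fun hw => ⟨fun hmin => ?_, fun hcomp w' hw' => ?_⟩
  · refine card_sdiff_add_card_sdiff_eq_dist_iff.1
      (le_antisymm ?_ (dist_card_le_card_sdiff_add_card_sdiff _ _))
    rw [mem_balanced_iff.1 hw, ← hdist₀]
    exact hmin w₀ hw₀
  · rw [card_sdiff_add_card_sdiff_eq_dist_iff.2 hcomp, mem_balanced_iff.1 hw,
      ← mem_balanced_iff.1 hw']
    exact dist_card_le_card_sdiff_add_card_sdiff _ _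

lemma Tset_subset_balanced (v : Fin m → Bool) : Tset m n v ⊆ balanced m n :=
  filter_subset _ _

lemma Tset_nonempty (h : n ≤ m) (v : Fin m → Bool) : (Tset m n v).Nonempty := by
  obtain ⟨w, hw, hcomp⟩ := exists_mem_balanced_subset_or_superset h v
  exact ⟨w, (mem_Tset_iff h).2 ⟨hw, hcomp⟩⟩

lemma card_Tset_of_le_card {v : Fin m → Bool} (hv : n ≤ #(trueSet v)) :
    #(Tset m n v) = (#(trueSet v)).choose n := by
  have h : n ≤ m := hv.trans (by simpa using card_le_univ (trueSet v))
  rw [← card_map trueSetEquiv.toEmbedding, ← card_powersetCard]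
  congr 1
  ext B
  obtain ⟨w, rfl⟩ := trueSetEquiv.surjective B
  rw [mem_map_equiv, Equiv.symm_apply_apply, mem_Tset_iff h, mem_balanced_iff,
    trueSetEquiv_apply, mem_powersetCard]
  constructor
  · rintro ⟨hw, hwv | hvw⟩
    · exact ⟨hwv, hw⟩
    · exact ⟨(eq_of_subset_of_card_le hvw (hw ▸ hv)).ge, hw⟩
  · rintro ⟨hwv, hw⟩
    exact ⟨hw, .inl hwv⟩

@[simp]
lemma not_comp_not_comp (v : Fin m → Bool) : not ∘ (not ∘ v) = v := by
  funext i; simp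

lemma sum_not_comp {M : Type*} [AddCommMonoid M] (f : (Fin m → Bool) → M) :
    ∑ ε, f (not ∘ ε) = ∑ ε, f ε :=
  Equiv.sum_comp (Function.Involutive.toPerm _ not_comp_not_comp) f

lemma not_comp_mem_Tset_not_comp_iff (hm : m = 2 * n) {v w : Fin m → Bool} :
    not ∘ w ∈ Tset m n (not ∘ v) ↔ w ∈ Tset m n v := by
  have hw := card_le_univ (trueSet w)
  rw [Fintype.card_fin] at hw
  rw [mem_Tset_iff (by omega), mem_Tset_iff (by omega), mem_balanced_iff, mem_balanced_iff,
    trueSet_not_comp, trueSet_not_comp, compl_subset_compl, compl_subset_compl, card_compl,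
    Fintype.card_fin, or_comm]
  exact and_congr_left fun _ => by omega

lemma card_Tset_not_comp (hm : m = 2 * n) (v : Fin m → Bool) :
    #(Tset m n (not ∘ v)) = #(Tset m n v) := by
  refine card_nbij' (not ∘ ·) (not ∘ ·) (fun w hw => ?_) (fun w hw => ?_)
    (fun w _ => not_comp_not_comp w) (fun w _ => not_comp_not_comp w)
  · exact (not_comp_mem_Tset_not_comp_iff hm).1 (by rwa [not_comp_not_comp])
  · exact (not_comp_mem_Tset_not_comp_iff hm).2 hw

lemma card_Tset_of_card_le (hm : m = 2 * n) {v : Fin m → Bool} (hv : #(trueSet v) ≤ n) :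
    #(Tset m n v) = (m - #(trueSet v)).choose n := by
  rw [← card_Tset_not_comp hm,
    card_Tset_of_le_card (by rw [card_trueSet_not_comp]; omega), card_trueSet_not_comp]

lemma sum_subset_inv_card_Tset (hm : m = 2 * n) {F : Finset (Fin m)} (hF : #F ≤ n) :
    ∑ ε : Fin m → Bool, (if trueSet ε ⊆ F then (1 : ℝ) / #(Tset m n ε) else 0)
      = ∑ j ∈ range (#F + 1), ((#F).choose j : ℝ) / (m - j).choose n := by
  calc ∑ ε : Fin m → Bool, (if trueSet ε ⊆ F then (1 : ℝ) / #(Tset m n ε) else 0)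
      = ∑ A ∈ F.powerset, (1 : ℝ) / #(Tset m n (trueSetEquiv.symm A)) := by
        rw [← trueSetEquiv.symm.sum_comp, ← sum_filter]
        congr 1
        ext A
        simp
    _ = ∑ A ∈ F.powerset, (1 : ℝ) / (m - #A).choose n := by
        refine sum_congr rfl fun A hA => ?_
        have hAn : #A ≤ n := (card_le_card (mem_powerset.1 hA)).trans hF
        rw [card_Tset_of_card_le hm (by simpa using hAn), trueSet_trueSetEquiv_symm]
    _ = _ := by
        rw [sum_powerset_apply_card fun k => (1 : ℝ) / (m - k).choose n]
        simp only [nsmul_eq_mul, mul_one_div]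

lemma sum_superset_inv_card_Tset (hm : m = 2 * n) (F : Finset (Fin m)) :
    ∑ ε : Fin m → Bool, (if F ⊆ trueSet ε then (1 : ℝ) / #(Tset m n ε) else 0)
      = ∑ ε : Fin m → Bool, (if trueSet ε ⊆ Fᶜ then (1 : ℝ) / #(Tset m n ε) else 0) := by
  rw [← sum_not_comp]
  simp only [trueSet_not_comp, card_Tset_not_comp hm, subset_compl_comm]

/-- `2 ^ m` times the probability that `t(ε) = e`. -/
noncomputable def hitWeight (m n : ℕ) (e : Fin m → Bool) : ℝ :=
  ∑ ε : Fin m → Bool, if e ∈ Tset m n ε then (1 : ℝ) / (Tset m n ε).card else 0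

/-- `2 ^ m` times the probability that `t(ε) = e` and `ε q ≠ e q`. -/
noncomputable def disagreeWeight (m n : ℕ) (e : Fin m → Bool) (q : Fin m) : ℝ :=
  ∑ ε : Fin m → Bool,
    if e ∈ Tset m n ε ∧ ε q ≠ e q then (1 : ℝ) / (Tset m n ε).card else 0

lemma sum_hitWeight_balanced (h : n ≤ m) : ∑ e ∈ balanced m n, hitWeight m n e = 2 ^ m := by
  have hε : ∀ ε : Fin m → Bool,
      ∑ e ∈ balanced m n, (if e ∈ Tset m n ε then (1 : ℝ) / #(Tset m n ε) else 0) = 1 := by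
    intro ε
    rw [← sum_filter, filter_mem_eq_inter, inter_eq_right.2 (Tset_subset_balanced ε), sum_const,
      nsmul_eq_mul, mul_one_div_cancel]
    exact_mod_cast (Tset_nonempty h ε).card_pos.ne'
  simp only [hitWeight]
  rw [sum_comm, sum_congr rfl fun ε _ => hε ε]
  simp

lemma hitWeight_eq_two_mul_sum_sub_one (hm : m = 2 * n) {e : Fin m → Bool}
    (he : e ∈ balanced m n) :
    hitWeight m n e = 2 * ∑ j ∈ range (n + 1), (n.choose j : ℝ) / (m - j).choose n - 1 := by
  set f : (Fin m → Bool) → ℝ := fun ε => 1 / #(Tset m n ε)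
  set E := trueSet e
  have hE : #E = n := mem_balanced_iff.1 he
  have hsuper : ∑ ε ∈ univ.filter (E ⊆ trueSet ·), f ε =
      ∑ j ∈ range (n + 1), (n.choose j : ℝ) / (m - j).choose n := by
    have hEc : #Eᶜ = n := by rw [card_compl, Fintype.card_fin, hE]; omega
    rw [sum_filter, sum_superset_inv_card_Tset hm, sum_subset_inv_card_Tset hm hEc.le, hEc]
  have hsub : ∑ ε ∈ univ.filter (trueSet · ⊆ E), f ε =
      ∑ j ∈ range (n + 1), (n.choose j : ℝ) / (m - j).choose n := by
    rw [sum_filter, sum_subset_inv_card_Tset hm hE.le, hE]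
  have hinter : univ.filter (E ⊆ trueSet ·) ∩ univ.filter (trueSet · ⊆ E) = {e} := by
    ext ε
    simp [← subset_antisymm_iff, E, trueSet_injective.eq_iff, eq_comm]
  have hfe : f e = 1 := by
    simp [f, card_Tset_of_le_card hE.ge, mem_balanced_iff.1 he]
  have hunion := sum_union_inter (s₁ := univ.filter (E ⊆ trueSet ·))
    (s₂ := univ.filter (trueSet · ⊆ E)) (f := f)
  rw [hinter, sum_singleton, hfe, hsuper, hsub, ← filter_or, sum_filter] at hunion
  have hhit : hitWeight m n e = ∑ ε, if E ⊆ trueSet ε ∨ trueSet ε ⊆ E then f ε else 0 := by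
    refine sum_congr rfl fun ε _ => ?_
    simp only [mem_Tset_iff (by omega : n ≤ m), he, true_and, E, f]
  linarith

lemma hitWeight_eq_two_pow_div_choose (hm : m = 2 * n) {e : Fin m → Bool}
    (he : e ∈ balanced m n) : hitWeight m n e = 2 ^ m / m.choose n := by
  have hsum := sum_hitWeight_balanced (m := m) (n := n) (by omega)
  have hconst : ∀ e' ∈ balanced m n, hitWeight m n e' = hitWeight m n e := fun e' he' =>
    (hitWeight_eq_two_mul_sum_sub_one hm he').trans (hitWeight_eq_two_mul_sum_sub_one hm he).symm
  rw [sum_congr rfl hconst, sum_const, card_balanced, nsmul_eq_mul] at hsum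
  rw [eq_div_iff (by exact_mod_cast (Nat.choose_pos (by omega : n ≤ m)).ne'), ← hsum, mul_comm]

lemma disagreeWeight_eq_of_apply_eq_true (hm : m = 2 * n) {e : Fin m → Bool}
    (he : e ∈ balanced m n) {q : Fin m} (hq : e q = true) :
    disagreeWeight m n e q = ∑ j ∈ range n, ((n - 1).choose j : ℝ) / (m - j).choose n := by
  have hqE : q ∈ trueSet e := by simpa [trueSet] using hq
  have hE : #((trueSet e).erase q) = n - 1 := by rw [card_erase_of_mem hqE, mem_balanced_iff.1 he]
  have hcond : ∀ ε : Fin m → Bool,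
      (e ∈ Tset m n ε ∧ ε q ≠ e q) ↔ trueSet ε ⊆ (trueSet e).erase q := by
    intro ε
    have hqε : ε q ≠ e q ↔ q ∉ trueSet ε := by simp [trueSet, hq]
    rw [mem_Tset_iff (by omega), hqε, subset_erase]
    constructor
    · rintro ⟨⟨-, hεe | hεe⟩, hqε⟩
      · exact absurd (hεe hqE) hqε
      · exact ⟨hεe, hqε⟩
    · rintro ⟨hεe, hqε⟩
      exact ⟨⟨he, .inr hεe⟩, hqε⟩
  have hn : n - 1 + 1 = n := by
    have := card_pos.2 ⟨q, hqE⟩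
    rw [mem_balanced_iff.1 he] at this
    omega
  simp only [disagreeWeight, hcond]
  rw [sum_subset_inv_card_Tset hm (by omega), hE, hn]

lemma disagreeWeight_not_comp (hm : m = 2 * n) (e : Fin m → Bool) (q : Fin m) :
    disagreeWeight m n (not ∘ e) q = disagreeWeight m n e q := by
  rw [disagreeWeight, ← sum_not_comp]
  simp [not_comp_mem_Tset_not_comp_iff hm, card_Tset_not_comp hm, disagreeWeight]

lemma choose_sub_one_div_choose_eq {j : ℕ} (hjn : j < n) :
    ((n - 1).choose j : ℝ) / (2 * n - j).choose n =
      (((j + 1) * (2 * n).choose (j + 1) : ℕ) - (j * (2 * n).choose j : ℕ) : ℝ) /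
        (2 * n * (2 * n).choose n) := by
  have h1 := Nat.choose_mul_succ_eq (n - 1) j
  rw [Nat.sub_add_cancel (by omega)] at h1
  have h2 := Nat.choose_mul (n := 2 * n) (k := n) (s := j) hjn.le
  rw [Nat.choose_symm_of_eq_add (show 2 * n - j = n - j + n by omega)] at h2
  have h3 := Nat.choose_succ_right_eq (2 * n) j
  have h1' : ((n - 1).choose j : ℝ) * n = n.choose j * (n - j) := by
    rw [← Nat.cast_sub hjn.le]; exact_mod_cast h1
  have h2' : ((2 * n).choose n : ℝ) * n.choose j = (2 * n).choose j * (2 * n - j).choose n := by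
    exact_mod_cast h2
  have h3' : ((2 * n).choose (j + 1) : ℝ) * (j + 1) = (2 * n).choose j * (2 * n - j) := by
    have := congrArg (Nat.cast : ℕ → ℝ) h3
    push_cast [Nat.cast_sub (by omega : j ≤ 2 * n)] at this
    exact this
  have hn : (0 : ℝ) < n := by exact_mod_cast (Nat.zero_le j).trans_lt hjn
  have hC : (0 : ℝ) < (2 * n).choose n := by exact_mod_cast Nat.choose_pos (by omega)
  rw [div_eq_div_iff (by exact_mod_cast (Nat.choose_pos (by omega)).ne') (by positivity)]
  push_cast
  linear_combination (2 * ((2 * n).choose n : ℝ)) * h1' + 2 * ((n : ℝ) - j) * h2'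
    - ((2 * n - j).choose n : ℝ) * h3'

lemma sum_range_choose_div_choose_eq_half (hn : n ≠ 0) :
    ∑ j ∈ range n, ((n - 1).choose j : ℝ) / (2 * n - j).choose n = 1 / 2 := by
  rw [sum_congr rfl fun j hj => choose_sub_one_div_choose_eq (mem_range.1 hj), ← sum_div,
    sum_range_sub (fun j => ((j * (2 * n).choose j : ℕ) : ℝ))]
  have : ((2 * n).choose n : ℝ) ≠ 0 := by exact_mod_cast (Nat.choose_pos (by omega)).ne'
  have : (n : ℝ) ≠ 0 := by exact_mod_cast hn
  push_cast
  field_simp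
  ring

lemma disagreeWeight_eq_half (hm : m = 2 * n) {e : Fin m → Bool} (he : e ∈ balanced m n)
    (q : Fin m) : disagreeWeight m n e q = 1 / 2 := by
  have hn : n ≠ 0 := by have := q.pos; omega
  have htrue : ∀ e' ∈ balanced m n, e' q = true → disagreeWeight m n e' q = 1 / 2 := by
    intro e' he' hq
    rw [disagreeWeight_eq_of_apply_eq_true hm he' hq, hm]
    exact sum_range_choose_div_choose_eq_half hn
  cases hq : e q
  · rw [← disagreeWeight_not_comp hm]
    refine htrue _ ?_ (by simp [hq])
    rw [mem_balanced_iff, card_trueSet_not_comp, mem_balanced_iff.1 he]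
    omega
  · exact htrue e he hq

open Real Stirling Nat

lemma centralBinom_mul_stirlingSeq_sq_mul_sqrt (hn : n ≠ 0) :
    (n.centralBinom : ℝ) * stirlingSeq n ^ 2 * √n = stirlingSeq (2 * n) * 4 ^ n := by
  have hfact : ((2 * n)! : ℝ) = n.centralBinom * n ! ^ 2 := by
    rw [← Nat.choose_mul_factorial_mul_factorial (show n ≤ 2 * n by omega),
      show 2 * n - n = n by omega, centralBinom_eq_two_mul_choose]
    push_cast; ring
  have hsqrt : √(2 * ((2 * n : ℕ) : ℝ)) = 2 * √n := by
    rw [show 2 * ((2 * n : ℕ) : ℝ) = 2 ^ 2 * n by push_cast; ring, sqrt_mul (by positivity),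
      sqrt_sq zero_le_two]
  have hn' : (0 : ℝ) < n := by positivity
  rw [stirlingSeq, stirlingSeq, hfact, hsqrt]
  field_simp
  push_cast
  rw [sq_sqrt hn'.le, sq_sqrt (by positivity),
    show (4 : ℝ) ^ n = 2 ^ (2 * n) by rw [pow_mul]; norm_num]
  ring

lemma centralBinom_mul_sqrt_le_four_pow (hn : n ≠ 0) :
    (n.centralBinom : ℝ) * √(π * n) ≤ 4 ^ n := by
  have hs₂ : 0 < stirlingSeq (2 * n) := by
    obtain ⟨k, hk⟩ := Nat.exists_eq_succ_of_ne_zero (show 2 * n ≠ 0 by omega)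
    rw [hk]; exact stirlingSeq'_pos k
  have hmono : stirlingSeq (2 * n) ≤ stirlingSeq n := by
    have := stirlingSeq'_antitone (show n - 1 ≤ 2 * n - 1 by omega)
    simpa [Nat.sub_add_cancel (show 1 ≤ n by omega),
      Nat.sub_add_cancel (show 1 ≤ 2 * n by omega)] using this
  have hpi : √π ≤ stirlingSeq n := sqrt_pi_le_stirlingSeq hn
  have key : √π * stirlingSeq (2 * n) ≤ stirlingSeq n ^ 2 := by
    rw [sq]; exact mul_le_mul hpi hmono hs₂.le ((sqrt_nonneg π).trans hpi)
  refine le_of_mul_le_mul_right ?_ hs₂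
  calc (n.centralBinom : ℝ) * √(π * n) * stirlingSeq (2 * n)
      = n.centralBinom * √n * (√π * stirlingSeq (2 * n)) := by rw [sqrt_mul pi_pos.le]; ring
    _ ≤ n.centralBinom * √n * stirlingSeq n ^ 2 := by gcongr
    _ = 4 ^ n * stirlingSeq (2 * n) := by
      linear_combination centralBinom_mul_stirlingSeq_sq_mul_sqrt hn

lemma half_choose_div_two_pow_le (hm : m = 2 * n) (hn : n ≠ 0) :
    (1 / 2) * (m.choose n : ℝ) / 2 ^ m ≤ 1 / √(2 * π * m) := by
  have hbound := centralBinom_mul_sqrt_le_four_pow hn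
  have hsqrt : √(2 * π * m) = 2 * √(π * n) := by
    rw [hm, show 2 * π * ((2 * n : ℕ) : ℝ) = 2 ^ 2 * (π * n) by push_cast; ring,
      sqrt_mul (by positivity), sqrt_sq zero_le_two]
  rw [hsqrt, le_div_iff₀ (by positivity), hm, ← centralBinom_eq_two_mul_choose, pow_mul,
    show (2 : ℝ) ^ 2 = 4 by norm_num]
  calc 1 / 2 * (n.centralBinom : ℝ) / 4 ^ n * (2 * √(π * n))
      = n.centralBinom * √(π * n) / 4 ^ n := by ring
    _ ≤ 1 := (div_le_one (by positivity)).2 hbound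

end

theorem coupling_disagreement_prob_general (n : ℕ) (m : ℕ)
    (hm : m = 2 * n) (q : Fin m) (e : Fin m → Bool) (he : e ∈ balanced m n) :
    (∑ ε : Fin m → Bool,
        if e ∈ Tset m n ε ∧ ε q ≠ e q then (1 : ℝ) / (Tset m n ε).card else 0) /
      (∑ ε : Fin m → Bool,
        if e ∈ Tset m n ε then (1 : ℝ) / (Tset m n ε).card else 0)
      = (1 / 2) * (m.choose n : ℝ) / 2 ^ m ∧
    (1 / 2) * (m.choose n : ℝ) / 2 ^ m ≤ 1 / Real.sqrt (2 * Real.pi * m) := by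
  have hn : n ≠ 0 := by have := q.pos; omega
  constructor
  · change disagreeWeight m n e q / hitWeight m n e = _
    have : (m.choose n : ℝ) ≠ 0 := by exact_mod_cast (Nat.choose_pos (by omega : n ≤ m)).ne'
    rw [disagreeWeight_eq_half hm he q, hitWeight_eq_two_pow_div_choose hm he]
    field_simp
  · exact half_choose_div_two_pow_le hm hn

/-- Coupling disagreement probability: for every coordinate `q` and every
balanced sign vector `e`,
`P(ε_q ≠ t_q(ε) | t(ε) = e) = (1/2)·C(m,n)·2^{−m} ≤ 1/√(2πm)`. -/
theorem coupling_disagreement_prob (n : ℕ) (hn : 0 < n) (m : ℕ)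
    (hm : m = 2 * n) (q : Fin m) (e : Fin m → Bool) (he : e ∈ balanced m n) :
    (∑ ε : Fin m → Bool,
        if e ∈ Tset m n ε ∧ ε q ≠ e q then (1 : ℝ) / (Tset m n ε).card else 0) /
      (∑ ε : Fin m → Bool,
        if e ∈ Tset m n ε then (1 : ℝ) / (Tset m n ε).card else 0)
      = (1 / 2) * (m.choose n : ℝ) / 2 ^ m ∧
    (1 / 2) * (m.choose n : ℝ) / 2 ^ m ≤ 1 / Real.sqrt (2 * Real.pi * m) :=
  coupling_disagreement_prob_general n m hm q e he
end

section
/- Let Z_N be a finite set of N = m + u labeled points with m = u, H a finite hypothesis class, and ℓ a loss bounded in [0,1]; write err_u(h) and err_m(h) for the average loss of h on the test set Z_u = Z_N \ Z_m and training set Z_m respectively, where Z_m is a uniformly random m-subset of Z_N. Suppose the function g(Z_m) = sup_{h∈H} (err_u(h) − err_m(h)) satisfies, with probability at least 1 − δ, g ≤ E[g] + √(2N log(1/δ)/(N − 1/2)²) (bounded-difference concentration). Then with probability at least 1 − δ, for all h ∈ H: err_u(h) ≤ err_m(h) + E[Q_{m,n}(L_H, Z_m)] + √(2N log(1/δ)/(N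 − 1/2)²), for any n ∈ {1,...,m−1}, where L_H = {ℓ_h : h ∈ H} and Q is the permutational Rademacher complexity. -/
/-!
Averaging `avg_T - avg_S` over the `n`-subsets `S` of the training set `Z` and the
`(m - n)`-subsets `T` of the test set `univ \ Z` gives back `err_u - err_m`, so the supremum
`g(Z)` is at most the average over `(S, T)` of the suprema. Summed over all `Z`, the involution
`(Z, S, T) ↦ (S ∪ T, S, Z \ S)` exchanges `T` with `Z \ S`, which turns that average into
`Q_{m,n}(L_H, Z)`; hence `E[g] ≤ E[Q_{m,n}]`, and the concentration hypothesis finishes the proof.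
-/

open Finset
open scoped Classical

/-- Average of `f` over a finite set. -/
noncomputable def favg {α : Type*} (f : α → ℝ) (S : Finset α) : ℝ :=
  (∑ x ∈ S, f x) / S.card

/-- Permutational Rademacher complexity of the loss class
`L_H = {ℓ_h : h ∈ H}` on the set `Zm`, with split parameter `n`. -/
noncomputable def PRCL {ι : Type*} {N : ℕ} (H : Finset ι) (hH : H.Nonempty)
    (ℓ : ι → Fin N → ℝ) (Zm : Finset (Fin N)) (n : ℕ) : ℝ :=
  (1 / (Zm.card.choose n : ℝ)) *
    ∑ S ∈ Zm.powersetCard n,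
      H.sup' hH fun h => favg (ℓ h) (Zm \ S) - favg (ℓ h) S

section
variable {α : Type*} [DecidableEq α]

theorem sum_powersetCard_sum_eq_choose_mul_sum (Z : Finset α) (f : α → ℝ) {n : ℕ}
    (hn : n ≠ 0) :
    ∑ S ∈ Z.powersetCard n, ∑ x ∈ S, f x = ((#Z - 1).choose (n - 1) : ℝ) * ∑ x ∈ Z, f x := by
  rw [Finset.sum_comm' (t' := Z) (s' := fun x => (Z.powersetCard n).filter ({x} ⊆ ·)), mul_sum]
  · refine sum_congr rfl fun x hx => ?_
    rw [sum_const, card_filter_powersetCard_subset {x} Z n (singleton_subset_iff.2 hx)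
      (by rw [card_singleton]; omega), card_singleton, nsmul_eq_mul]
  · intro S x
    simp only [mem_filter, mem_powersetCard, singleton_subset_iff]
    exact ⟨fun ⟨⟨hSZ, hS⟩, hx⟩ => ⟨⟨⟨hSZ, hS⟩, hx⟩, hSZ hx⟩, fun ⟨h, _⟩ => h⟩

theorem sum_favg_powersetCard (Z : Finset α) (f : α → ℝ) {n : ℕ} (hn : n ≠ 0) :
    ∑ S ∈ Z.powersetCard n, favg f S = ((#Z).choose n : ℝ) * favg f Z := by
  have hS : ∀ S ∈ Z.powersetCard n, favg f S = (∑ x ∈ S, f x) / n := fun S hS => by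
    rw [favg, (mem_powersetCard.1 hS).2]
  rw [sum_congr rfl hS, ← sum_div, sum_powersetCard_sum_eq_choose_mul_sum Z f hn, favg]
  rcases Z.eq_empty_or_nonempty with rfl | hZ
  · simp
  have hchoose : ((#Z : ℕ) : ℝ) * (#Z - 1).choose (n - 1) = (#Z).choose n * n := by
    have := Nat.add_one_mul_choose_eq (#Z - 1) (n - 1)
    rw [Nat.sub_add_cancel hZ.card_pos, Nat.sub_add_cancel (Nat.pos_of_ne_zero hn)] at this
    exact_mod_cast this
  have : (#Z : ℝ) ≠ 0 := by exact_mod_cast hZ.card_pos.ne'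
  field_simp
  linear_combination (∑ x ∈ Z, f x) * hchoose

theorem choose_mul_choose_mul_sup'_le {ι : Type*} (H : Finset ι) (hH : H.Nonempty)
    (ℓ : ι → α → ℝ) (A B : Finset α) {n k : ℕ} (hn : n ≠ 0) (hk : k ≠ 0) :
    ((#A).choose n * (#B).choose k : ℝ) * H.sup' hH (fun h => favg (ℓ h) B - favg (ℓ h) A)
      ≤ ∑ S ∈ A.powersetCard n, ∑ T ∈ B.powersetCard k,
          H.sup' hH fun h => favg (ℓ h) T - favg (ℓ h) S := by
  obtain ⟨h₀, hh₀, hsup⟩ := exists_mem_eq_sup' hH fun h => favg (ℓ h) B - favg (ℓ h) A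
  calc _ = ∑ S ∈ A.powersetCard n, ∑ T ∈ B.powersetCard k, (favg (ℓ h₀) T - favg (ℓ h₀) S) := by
        simp only [hsup, sum_sub_distrib, sum_const, card_powersetCard, nsmul_eq_mul, ← mul_sum,
          sum_favg_powersetCard _ _ hn, sum_favg_powersetCard _ _ hk]
        ring
    _ ≤ _ := sum_le_sum fun S _ => sum_le_sum fun T _ =>
        le_sup' (fun h => favg (ℓ h) T - favg (ℓ h) S) hh₀

theorem sum_powersetCard_sum_powersetCard_sdiff_swap (U : Finset α) {m n k : ℕ} (hm : n + k = m)
    (F : Finset α → Finset α → ℝ) :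
    ∑ Z ∈ U.powersetCard m, ∑ S ∈ Z.powersetCard n, ∑ T ∈ (U \ Z).powersetCard k, F S T
      = ∑ Z ∈ U.powersetCard m, ∑ S ∈ Z.powersetCard n, ∑ _T ∈ (U \ Z).powersetCard k,
          F S (Z \ S) := by
  simp only [← sum_product', sum_sigma']
  -- `(Z, S, T) ↦ (S ∪ T, S, Z \ S)` is an involution exchanging the roles of `T` and `Z \ S`.
  let σ : (Σ _ : Finset α, Finset α × Finset α) → Σ _ : Finset α, Finset α × Finset α :=
    fun x => ⟨x.2.1 ∪ x.2.2, x.2.1, x.1 \ x.2.1⟩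
  have key : ∀ x ∈ (U.powersetCard m).sigma fun Z => Z.powersetCard n ×ˢ (U \ Z).powersetCard k,
      σ x ∈ (U.powersetCard m).sigma (fun Z => Z.powersetCard n ×ˢ (U \ Z).powersetCard k) ∧
        σ (σ x) = x ∧ (σ x).1 \ (σ x).2.1 = x.2.2 := by
    rintro ⟨Z, S, T⟩ h
    simp only [mem_sigma, mem_product, mem_powersetCard] at h
    obtain ⟨⟨hZU, hZ⟩, ⟨hSZ, hS⟩, hTU, hT⟩ := h
    have hTZ : Disjoint T Z := disjoint_of_subset_left hTU sdiff_disjoint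
    have hST : Disjoint S T := hTZ.symm.mono_left hSZ
    simp only [σ, mem_sigma, mem_product, mem_powersetCard, union_sdiff_cancel_left hST,
      union_sdiff_of_subset hSZ, card_union_of_disjoint hST, card_sdiff_of_subset hSZ]
    grind
  exact sum_nbij' σ σ (fun x hx => (key x hx).1) (fun x hx => (key x hx).1)
    (fun x hx => (key x hx).2.1) (fun x hx => (key x hx).2.1) fun x hx =>
      congrArg (F x.2.1) (key x hx).2.2.symm

end

theorem sum_sup'_le_sum_PRCL {ι : Type*} {N m n : ℕ} (hn : n ≠ 0) (hnm : n < m)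
    (hmN : m - n ≤ N - m) (H : Finset ι) (hH : H.Nonempty) (ℓ : ι → Fin N → ℝ) :
    ∑ Z ∈ (univ : Finset (Fin N)).powersetCard m,
        H.sup' hH (fun h => favg (ℓ h) (univ \ Z) - favg (ℓ h) Z)
      ≤ ∑ Z ∈ (univ : Finset (Fin N)).powersetCard m, PRCL H hH ℓ Z n := by
  set F : Finset (Fin N) → Finset (Fin N) → ℝ :=
    fun S T => H.sup' hH fun h => favg (ℓ h) T - favg (ℓ h) S
  have hcard : ∀ Z ∈ (univ : Finset (Fin N)).powersetCard m, #Z = m ∧ #(univ \ Z) = N - m :=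
    fun Z hZ => by
      rw [mem_powersetCard_univ] at hZ
      rw [card_univ_sdiff, Fintype.card_fin, hZ]
      exact ⟨rfl, rfl⟩
  have hc : (0 : ℝ) < m.choose n * (N - m).choose (m - n) := by
    have := Nat.choose_pos hnm.le
    have := Nat.choose_pos hmN
    positivity
  refine le_of_mul_le_mul_left ?_ hc
  calc _ = ∑ Z ∈ (univ : Finset (Fin N)).powersetCard m,
        ((#Z).choose n * (#(univ \ Z)).choose (m - n) : ℝ) *
          H.sup' hH (fun h => favg (ℓ h) (univ \ Z) - favg (ℓ h) Z) := by
        rw [mul_sum]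
        refine sum_congr rfl fun Z hZ => ?_
        rw [(hcard Z hZ).1, (hcard Z hZ).2]
    _ ≤ ∑ Z ∈ (univ : Finset (Fin N)).powersetCard m, ∑ S ∈ Z.powersetCard n,
          ∑ T ∈ (univ \ Z).powersetCard (m - n), F S T :=
        sum_le_sum fun Z _ => choose_mul_choose_mul_sup'_le H hH ℓ Z _ hn (by omega)
    _ = ∑ Z ∈ (univ : Finset (Fin N)).powersetCard m, ∑ S ∈ Z.powersetCard n,
          ∑ _T ∈ (univ \ Z).powersetCard (m - n), F S (Z \ S) :=
        sum_powersetCard_sum_powersetCard_sdiff_swap _ (by omega) F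
    _ = _ := by
        rw [mul_sum]
        refine sum_congr rfl fun Z hZ => ?_
        have hm : (m.choose n : ℝ) ≠ 0 := Nat.cast_ne_zero.2 (Nat.choose_pos hnm.le).ne'
        simp only [PRCL, sum_const, card_powersetCard, (hcard Z hZ).1, (hcard Z hZ).2, nsmul_eq_mul,
          ← mul_sum]
        field_simp
        rfl

-- Probabilities over the uniformly random training set are counts of `m`-subsets of `Fin N`.
theorem transductive_risk_bound_general {ι : Type*} {N m u n : ℕ}
    (hN : N = m + u) (hmu : m = u) (hn : 1 ≤ n)
    (hnm : n ≤ m - 1) (H : Finset ι) (hH : H.Nonempty) (ℓ : ι → Fin N → ℝ)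
    (δ : ℝ)
    (hconc :
      ((1 - δ) * (N.choose m : ℝ)) ≤
        (((Finset.univ : Finset (Fin N)).powersetCard m).filter fun Zm =>
            H.sup' hH (fun h =>
                favg (ℓ h) (Finset.univ \ Zm) - favg (ℓ h) Zm)
              ≤ (1 / (N.choose m : ℝ)) *
                  ∑ Z ∈ (Finset.univ : Finset (Fin N)).powersetCard m,
                    H.sup' hH (fun h =>
                      favg (ℓ h) (Finset.univ \ Z) - favg (ℓ h) Z)
                + Real.sqrt (2 * N * Real.log (1 / δ) / (N - 1 / 2) ^ 2)).card) :
    ((1 - δ) * (N.choose m : ℝ)) ≤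
      (((Finset.univ : Finset (Fin N)).powersetCard m).filter fun Zm =>
          ∀ h ∈ H,
            favg (ℓ h) (Finset.univ \ Zm)
              ≤ favg (ℓ h) Zm
                + (1 / (N.choose m : ℝ)) *
                    ∑ Z ∈ (Finset.univ : Finset (Fin N)).powersetCard m,
                      PRCL H hH ℓ Z n
                + Real.sqrt (2 * N * Real.log (1 / δ) / (N - 1 / 2) ^ 2)).card := by
  have hprc := sum_sup'_le_sum_PRCL (by omega : n ≠ 0) (by omega : n < m)
    (by omega : m - n ≤ N - m) H hH ℓ
  refine hconc.trans (Nat.cast_le.2 (card_le_card (monotone_filter_right _ ?_)))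
  intro Z _ hgZ h hh
  have hle := le_sup' (fun h => favg (ℓ h) (univ \ Z) - favg (ℓ h) Z) hh
  have hmean := mul_le_mul_of_nonneg_left hprc (by positivity : (0 : ℝ) ≤ 1 / N.choose m)
  linarith

/-- Transductive risk bound in expectation-of-PRC form.  The general
population is `Fin N` with `N = m + u`, `m = u`; `ℓ h i ∈ [0,1]` is the loss
of hypothesis `h` at the labeled point `i`; the training set `Zm` is a
uniformly random `m`-subset.  Assuming the bounded-difference concentration
statement for `g(Zm) = sup_{h∈H}(err_u(h) − err_m(h))` (stated as: with
probability `≥ 1 − δ` over `Zm`, `g ≤ E[g] + slack`), with probability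
`≥ 1 − δ` every `h ∈ H` satisfies
`err_u(h) ≤ err_m(h) + E[PRC(L_H, ·, n)] + slack`. -/
theorem transductive_risk_bound {ι : Type*} {N m u n : ℕ}
    (hN : N = m + u) (hmu : m = u) (hme : Even m) (hn : 1 ≤ n)
    (hnm : n ≤ m - 1) (H : Finset ι) (hH : H.Nonempty) (ℓ : ι → Fin N → ℝ)
    (hℓ : ∀ h ∈ H, ∀ i, 0 ≤ ℓ h i ∧ ℓ h i ≤ 1) (δ : ℝ) (hδ0 : 0 < δ)
    (hδ1 : δ < 1)
    (hconc :
      ((1 - δ) * (N.choose m : ℝ)) ≤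
        (((Finset.univ : Finset (Fin N)).powersetCard m).filter fun Zm =>
            H.sup' hH (fun h =>
                favg (ℓ h) (Finset.univ \ Zm) - favg (ℓ h) Zm)
              ≤ (1 / (N.choose m : ℝ)) *
                  ∑ Z ∈ (Finset.univ : Finset (Fin N)).powersetCard m,
                    H.sup' hH (fun h =>
                      favg (ℓ h) (Finset.univ \ Z) - favg (ℓ h) Z)
                + Real.sqrt (2 * N * Real.log (1 / δ) / (N - 1 / 2) ^ 2)).card) :
    ((1 - δ) * (N.choose m : ℝ)) ≤
      (((Finset.univ : Finset (Fin N)).powersetCard m).filter fun Zm =>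
          ∀ h ∈ H,
            favg (ℓ h) (Finset.univ \ Zm)
              ≤ favg (ℓ h) Zm
                + (1 / (N.choose m : ℝ)) *
                    ∑ Z ∈ (Finset.univ : Finset (Fin N)).powersetCard m,
                      PRCL H hH ℓ Z n
                + Real.sqrt (2 * N * Real.log (1 / δ) / (N - 1 / 2) ^ 2)).card :=
  transductive_risk_bound_general hN hmu hn hnm H hH ℓ δ hconc
end
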